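/- arXiv:1608.03978 — 7 statements merged into one kernel-verified Lean document; each statement's English description precedes it below -/
import Mathlib

section
/- Let n ≥ 1 and m ≥ 0 be integers, α ∈ ℝ, and k ∈ ℂ with k ≠ 0 and (n+m) − α/(ik) ≠ 0. Suppose vectors a_in, a_out ∈ ℂⁿ and b ∈ ℂᵐ satisfy the δ-coupling equations: a_out,j + a_in,j = a_out,i + a_in,i for all i, j ∈ {1,…,n}; a_out,i + a_in,i = b_s for all i ∈ {1,…,n} and s ∈ {1,…,m}; and ik·(Σ_{j=1}^{n}(a_out,j − a_in,j) + Σ_{s=1}^{m} b_s) = α·(a_out,1 + a_in,1). Then for every i ∈ {1,…,n}, a_out,i = (2/((n+m) − α/(ik)))·Σ_{j=1}^{n} a_in,j − a_in,i; that is, a_out = σ̃_δ(k)·a_in where σ̃_δ(k) = (2/((n+m) − α/(ik)))·J − I, J being the n×n all-ones matrix and I the n×n identity matrix. -/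
open Matrix Complex

/-- For a vertex joining `n ≥ 1` internal edges and `m` leads with a `δ`-coupling of
strength `α`, the coupling equations imply
`a_out = ((2/((n+m) - α/(ik))) • J - I) a_in`, i.e. the effective vertex-scattering
matrix of the `δ`-coupling is `σ̃_δ(k) = (2/((n+m) - α/(ik))) • J - I`. -/
theorem stmt_2 (n m : ℕ) (hn : 1 ≤ n) (α : ℝ) (k : ℂ) (hk : k ≠ 0)
    (hden : ((n : ℂ) + m) - α / (Complex.I * k) ≠ 0)
    (a_in a_out : Fin n → ℂ) (b : Fin m → ℂ)
    (hcont : ∀ i j : Fin n, a_out j + a_in j = a_out i + a_in i)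
    (hlead : ∀ (i : Fin n) (s : Fin m), a_out i + a_in i = b s)
    (hsum : Complex.I * k * ((∑ j, (a_out j - a_in j)) + ∑ s, b s)
      = α * (a_out ⟨0, hn⟩ + a_in ⟨0, hn⟩)) :
    (∀ i : Fin n, a_out i = (2 / (((n : ℂ) + m) - α / (Complex.I * k))) * (∑ j, a_in j) - a_in i)
    ∧ a_out = ((2 / (((n : ℂ) + m) - α / (Complex.I * k)))
        • (Matrix.of fun _ _ : Fin n => (1 : ℂ)) - (1 : Matrix (Fin n) (Fin n) ℂ)) *ᵥ a_in := by
  have hIk : Complex.I * k ≠ 0 := mul_ne_zero Complex.I_ne_zero hk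
  set c := a_out ⟨0, hn⟩ + a_in ⟨0, hn⟩ with hc
  set S := ∑ j, a_in j with hSdef
  have hci : ∀ i, a_out i + a_in i = c := fun i => hcont _ i
  have hb : ∀ s, b s = c := fun s => (hlead ⟨0, hn⟩ s).symm
  have hS1 : ∑ j, (a_out j - a_in j) = n * c - 2 * S := by
    calc ∑ j, (a_out j - a_in j) = ∑ j, ((a_out j + a_in j) - 2 * a_in j) :=
          Finset.sum_congr rfl (fun j _ => by ring)
      _ = ∑ j : Fin n, (c - 2 * a_in j) := Finset.sum_congr rfl (fun j _ => by rw [hci j])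
      _ = n * c - 2 * S := by
          simp [Finset.sum_sub_distrib, Finset.mul_sum, hSdef]
  have hS2 : ∑ s, b s = m * c := by
    simp [hb, Finset.sum_const, mul_comm]
  rw [hS1, hS2] at hsum
  have h2 : c * (((n : ℂ) + m) - α / (Complex.I * k)) = 2 * S := by
    field_simp
    linear_combination hsum
  have key : c = 2 / (((n : ℂ) + m) - α / (Complex.I * k)) * S := by
    rw [div_mul_eq_mul_div, eq_div_iff hden]
    linear_combination h2
  have part1 : ∀ i : Fin n,
      a_out i = 2 / (((n : ℂ) + m) - α / (Complex.I * k)) * S - a_in i := by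
    intro i
    have := hci i
    linear_combination this + key
  refine ⟨part1, ?_⟩
  funext i
  rw [part1 i]
  simp only [Matrix.mulVec, dotProduct, Matrix.sub_apply, Matrix.smul_apply,
    Matrix.of_apply, Matrix.one_apply, smul_eq_mul, mul_one, sub_mul, ite_mul, one_mul,
    zero_mul, Finset.sum_sub_distrib, Finset.sum_ite_eq, Finset.mem_univ, if_true,
    ← Finset.mul_sum, hSdef]
end

section
/- Let n ≥ 1 and m ≥ 0 be integers, β ∈ ℝ, and k ∈ ℂ with ikβ − (n+m) ≠ 0. Suppose vectors a_in, a_out ∈ ℂⁿ and b ∈ ℂᵐ satisfy the δ′_s-coupling equations: a_out,j − a_in,j = a_out,i − a_in,i for all i, j ∈ {1,…,n}; a_out,i − a_in,i = b_s for all i ∈ {1,…,n} and s ∈ {1,…,m}; and Σ_{j=1}^{n}(a_out,j + a_in,j) + Σ_{s=1}^{m} b_s = ikβ·(a_out,1 − a_in,1). Then for every i ∈ {1,…,n}, a_out,i = a_in,i + (2/(ikβ − (n+m)))·Σ_{j=1}^{n} a_in,j; that is, a_out = σ̃_{δ′}(k)·a_in where σ̃_{δ′}(k) = (2/(ikβ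 − (n+m)))·J + I, J being the n×n all-ones matrix and I the n×n identity matrix. -/
open Matrix Complex

/-- For a vertex joining `n ≥ 1` internal edges and `m` leads with a `δ′_s`-coupling of
strength `β`, the coupling equations imply
`a_out = ((2/(ikβ - (n+m))) • J + I) a_in`, i.e. the effective vertex-scattering matrix
of the `δ′_s`-coupling is `σ̃_{δ′}(k) = (2/(ikβ - (n+m))) • J + I`. -/
theorem stmt_3 (n m : ℕ) (hn : 1 ≤ n) (β : ℝ) (k : ℂ)
    (hden : Complex.I * k * β - ((n : ℂ) + m) ≠ 0)
    (a_in a_out : Fin n → ℂ) (b : Fin m → ℂ)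
    (hder : ∀ i j : Fin n, a_out j - a_in j = a_out i - a_in i)
    (hlead : ∀ (i : Fin n) (s : Fin m), a_out i - a_in i = b s)
    (hsum : (∑ j, (a_out j + a_in j)) + ∑ s, b s
      = Complex.I * k * β * (a_out ⟨0, hn⟩ - a_in ⟨0, hn⟩)) :
    (∀ i : Fin n, a_out i
        = a_in i + (2 / (Complex.I * k * β - ((n : ℂ) + m))) * ∑ j, a_in j)
    ∧ a_out = ((2 / (Complex.I * k * β - ((n : ℂ) + m)))
        • (Matrix.of fun _ _ : Fin n => (1 : ℂ)) + (1 : Matrix (Fin n) (Fin n) ℂ)) *ᵥ a_in := by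
  set i0 : Fin n := ⟨0, hn⟩
  set d : ℂ := a_out i0 - a_in i0 with hd
  have hd' : ∀ i : Fin n, a_out i = a_in i + d := by
    intro i
    show a_out i = a_in i + (a_out i0 - a_in i0)
    linear_combination hder i0 i
  have hb : ∀ s : Fin m, b s = d := fun s => (hlead i0 s).symm
  have hkey : d * (Complex.I * k * β - ((n : ℂ) + m)) = 2 * ∑ j, a_in j := by
    have h1 : (∑ j, (a_out j + a_in j)) = 2 * (∑ j, a_in j) + n * d := by
      have : ∀ j : Fin n, a_out j + a_in j = 2 * a_in j + d := by
        intro j; rw [hd' j]; ring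
      rw [Finset.sum_congr rfl fun j _ => this j, Finset.sum_add_distrib,
        ← Finset.mul_sum, Finset.sum_const, Finset.card_univ, Fintype.card_fin,
        nsmul_eq_mul]
    have h2 : (∑ s, b s) = m * d := by
      rw [Finset.sum_congr rfl fun s _ => hb s, Finset.sum_const, Finset.card_univ,
        Fintype.card_fin, nsmul_eq_mul]
    rw [h1, h2] at hsum
    linear_combination -hsum
  have hdval : d = 2 / (Complex.I * k * β - ((n : ℂ) + m)) * ∑ j, a_in j := by
    field_simp
    linear_combination hkey
  have hmain : ∀ i : Fin n, a_out i
      = a_in i + (2 / (Complex.I * k * β - ((n : ℂ) + m))) * ∑ j, a_in j := by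
    intro i; rw [hd' i, hdval]
  refine ⟨hmain, ?_⟩
  funext i
  rw [hmain i]
  simp only [Matrix.add_mulVec, Matrix.mulVec, dotProduct, Matrix.add_apply,
    Matrix.smul_apply, Matrix.of_apply, Matrix.one_apply, smul_eq_mul, mul_one,
    add_mul, one_mul, ite_mul, zero_mul, Finset.sum_add_distrib, Finset.sum_ite_eq,
    Finset.mem_univ, if_true, ← Finset.mul_sum]
  ring
end

section
/- Let G be a finite index set, and for each γ ∈ G let m_γ ∈ ℕ, let A_γ : ℂ → ℂ be twice differentiable, and let ℓ_γ : ℝ → ℝ be twice differentiable. Let k : ℝ → ℂ be twice differentiable and suppose that F(t) := Σ_{γ∈G} (−1)^{m_γ} · A_γ(k(t)) · e^{i·k(t)·ℓ_γ(t)} = 0 for all t in a neighborhood of 0. Then, with all quantities evaluated at t = 0 (writing k = k(0), k̇ = k′(0), k̈ = k″(0), ℓ_γ = ℓ_γ(0), ℓ̇_γ = ℓ_γ′(0), ℓ̈_γ = ℓ_γ″(0)), the following identity holds: k̈ · Σ_γ (ℓ_γ·A_γ(k) − i·A_γ′(k))·(−1)^{m_γ}·e^{ikℓ_γ} + 2k̇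 · Σ_γ (ik·ℓ_γ·ℓ̇_γ·A_γ(k) + ℓ̇_γ·A_γ(k) + k·ℓ̇_γ·A_γ′(k))·(−1)^{m_γ}·e^{ikℓ_γ} + (k̇)² · Σ_γ (2ℓ_γ·A_γ′(k) − i·A_γ″(k) + i·ℓ_γ²·A_γ(k))·(−1)^{m_γ}·e^{ikℓ_γ} + k · Σ_γ (ℓ̈_γ + ik·(ℓ̇_γ)²)·A_γ(k)·(−1)^{m_γ}·e^{ikℓ_γ} = 0. -/
/-!
Write each term of the resonance condition as `g γ (t) * exp (φ γ (t))` with amplitude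
`g γ = (-1)^{m γ} A γ ∘ k` and phase `φ γ = i k ℓ γ`. Then
`(g e^φ)'' = (g'' + 2 g' φ' + g (φ'' + φ'^2)) e^φ`, and the sum of these second derivatives vanishes
at `0` because the resonance condition holds on a neighbourhood of `0`. Expanding `g'', g', φ'', φ'`
by the chain and product rules, the claimed expression is exactly `-i` times this sum.
-/

open Complex Filter Topology

theorem second_deriv_eq_zero_of_eventually_eq_zero {𝕜 E : Type*}
    [NontriviallyNormedField 𝕜] [NormedAddCommGroup E] [NormedSpace 𝕜 E]
    {f f' : 𝕜 → E} {f'' : E} {x : 𝕜} (hf : ∀ᶠ t in 𝓝 x, f t = 0)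
    (hf' : ∀ᶠ t in 𝓝 x, HasDerivAt f (f' t) t) (hf'' : HasDerivAt f' f'' x) : f'' = 0 := by
  have hderiv : f' =ᶠ[𝓝 x] fun _ => 0 := by
    filter_upwards [eventually_eventually_nhds.2 hf, hf'] with t hft hf't
    exact hf't.unique ((hasDerivAt_const t (0 : E)).congr_of_eventuallyEq hft)
  exact hf''.unique ((hasDerivAt_const x (0 : E)).congr_of_eventuallyEq hderiv)

section MulCexp

variable {𝕜 : Type*} [NontriviallyNormedField 𝕜] [NormedAlgebra 𝕜 ℂ]
  {g g' g'' φ φ' φ'' : 𝕜 → ℂ}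

theorem hasDerivAt_mul_cexp (hg : ∀ t, HasDerivAt g (g' t) t)
    (hφ : ∀ t, HasDerivAt φ (φ' t) t) (t : 𝕜) :
    HasDerivAt (fun s => g s * cexp (φ s)) ((g' t + g t * φ' t) * cexp (φ t)) t :=
  ((hg t).mul (hφ t).cexp).congr_deriv (by ring)

theorem hasDerivAt_deriv_mul_cexp (hg : ∀ t, HasDerivAt g (g' t) t)
    (hg' : ∀ t, HasDerivAt g' (g'' t) t) (hφ : ∀ t, HasDerivAt φ (φ' t) t)
    (hφ' : ∀ t, HasDerivAt φ' (φ'' t) t) (t : 𝕜) :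
    HasDerivAt (fun s => (g' s + g s * φ' s) * cexp (φ s))
      ((g'' t + 2 * g' t * φ' t + g t * (φ'' t + φ' t ^ 2)) * cexp (φ t)) t :=
  (hasDerivAt_mul_cexp (fun s => (hg' s).fun_add ((hg s).fun_mul (hφ' s))) hφ t).congr_deriv
    (by ring)

end MulCexp

/-- Second-order equation for the second derivative of the resonance pole position with
respect to the perturbation parameter, obtained by differentiating twice the pseudo-orbit
resonance condition `Σ_γ (-1)^{m_γ} A_γ(k(t)) e^{i k(t) ℓ_γ(t)} = 0`. -/
theorem stmt_7 {G : Type*} [Fintype G] (m : G → ℕ) (A : G → ℂ → ℂ) (ℓ : G → ℝ → ℝ)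
    (k : ℝ → ℂ)
    (hA : ∀ γ, Differentiable ℂ (A γ)) (hA' : ∀ γ, Differentiable ℂ (deriv (A γ)))
    (hℓ : ∀ γ, Differentiable ℝ (ℓ γ)) (hℓ' : ∀ γ, Differentiable ℝ (deriv (ℓ γ)))
    (hk : Differentiable ℝ k) (hk' : Differentiable ℝ (deriv k))
    (hF : ∀ᶠ t in nhds (0 : ℝ),
      ∑ γ, (-1 : ℂ) ^ (m γ) * A γ (k t) * Complex.exp (Complex.I * k t * (ℓ γ t)) = 0) :
    deriv (deriv k) 0
        * ∑ γ, ((ℓ γ 0 : ℂ) * A γ (k 0) - Complex.I * deriv (A γ) (k 0))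
          * (-1 : ℂ) ^ (m γ) * Complex.exp (Complex.I * k 0 * (ℓ γ 0))
      + 2 * deriv k 0
        * ∑ γ, (Complex.I * k 0 * (ℓ γ 0 : ℂ) * ((deriv (ℓ γ) 0 : ℝ) : ℂ) * A γ (k 0)
            + ((deriv (ℓ γ) 0 : ℝ) : ℂ) * A γ (k 0)
            + k 0 * ((deriv (ℓ γ) 0 : ℝ) : ℂ) * deriv (A γ) (k 0))
          * (-1 : ℂ) ^ (m γ) * Complex.exp (Complex.I * k 0 * (ℓ γ 0))
      + (deriv k 0) ^ 2
        * ∑ γ, (2 * (ℓ γ 0 : ℂ) * deriv (A γ) (k 0)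
            - Complex.I * deriv (deriv (A γ)) (k 0)
            + Complex.I * (ℓ γ 0 : ℂ) ^ 2 * A γ (k 0))
          * (-1 : ℂ) ^ (m γ) * Complex.exp (Complex.I * k 0 * (ℓ γ 0))
      + k 0
        * ∑ γ, (((deriv (deriv (ℓ γ)) 0 : ℝ) : ℂ)
            + Complex.I * k 0 * ((deriv (ℓ γ) 0 : ℝ) : ℂ) ^ 2) * A γ (k 0)
          * (-1 : ℂ) ^ (m γ) * Complex.exp (Complex.I * k 0 * (ℓ γ 0)) = 0 := by
  have hg : ∀ γ t, HasDerivAt (fun s => (-1 : ℂ) ^ m γ * A γ (k s))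
      ((-1 : ℂ) ^ m γ * (deriv (A γ) (k t) * deriv k t)) t := fun γ t =>
    (((hA γ (k t)).hasDerivAt).comp t (hk t).hasDerivAt).const_mul _
  have hg' : ∀ γ t, HasDerivAt (fun s => (-1 : ℂ) ^ m γ * (deriv (A γ) (k s) * deriv k s))
      ((-1 : ℂ) ^ m γ * (deriv (deriv (A γ)) (k t) * deriv k t * deriv k t
        + deriv (A γ) (k t) * deriv (deriv k) t)) t := fun γ t =>
    ((((hA' γ (k t)).hasDerivAt).comp t (hk t).hasDerivAt).mul (hk' t).hasDerivAt).const_mul _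
  have hφ : ∀ γ t, HasDerivAt (fun s => I * k s * (ℓ γ s : ℂ))
      (I * deriv k t * ℓ γ t + I * k t * ((deriv (ℓ γ) t : ℝ) : ℂ)) t := fun γ t =>
    ((hk t).hasDerivAt.const_mul I).mul (hℓ γ t).hasDerivAt.ofReal_comp
  have hφ' : ∀ γ t, HasDerivAt
      (fun s => I * deriv k s * ℓ γ s + I * k s * ((deriv (ℓ γ) s : ℝ) : ℂ))
      (I * deriv (deriv k) t * ℓ γ t + I * deriv k t * ((deriv (ℓ γ) t : ℝ) : ℂ)
        + (I * deriv k t * ((deriv (ℓ γ) t : ℝ) : ℂ)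
          + I * k t * ((deriv (deriv (ℓ γ)) t : ℝ) : ℂ))) t :=
    fun γ t => (((hk' t).hasDerivAt.const_mul I).mul (hℓ γ t).hasDerivAt.ofReal_comp).add
      (((hk t).hasDerivAt.const_mul I).mul (hℓ' γ t).hasDerivAt.ofReal_comp)
  have key := second_deriv_eq_zero_of_eventually_eq_zero hF
    (.of_forall fun t => HasDerivAt.fun_sum fun γ _ => hasDerivAt_mul_cexp (hg γ) (hφ γ) t)
    (HasDerivAt.fun_sum fun γ _ => hasDerivAt_deriv_mul_cexp (hg γ) (hg' γ) (hφ γ) (hφ' γ) 0)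
  rw [← mul_zero (-I), ← key, Finset.mul_sum]
  simp only [Finset.mul_sum, ← Finset.sum_add_distrib]
  refine Finset.sum_congr rfl fun γ _ => ?_
  ring_nf
  simp only [I_sq, I_pow_three]
  ring
end

section
/- Let G be a finite index set, and for each γ ∈ G let m_γ ∈ ℕ, A_γ ∈ ℝ a constant (independent of k), and ℓ_γ, ℓ̇_γ, ℓ̈_γ ∈ ℝ. Let k ∈ ℝ, k̇ ∈ ℝ and k̈ ∈ ℂ satisfy the second-order equation k̈·Σ_γ ℓ_γ A_γ(−1)^{m_γ}e^{ikℓ_γ} + 2k̇·Σ_γ (ik ℓ_γ ℓ̇_γ A_γ + ℓ̇_γ A_γ)(−1)^{m_γ}e^{ikℓ_γ} + (k̇)²·Σ_γ i ℓ_γ² A_γ (−1)^{m_γ}e^{ikℓ_γ} + k·Σ_γ (ℓ̈_γ + ik(ℓ̇_γ)²) A_γ (−1)^{m_γ}e^{ikℓ_γ} = 0. Set Cs = Σ_γ ℓ_γ(−1)^{m_γ}A_γ cos(kℓ_γ), Sn = Σ_γ ℓ_γ(−1)^{m_γ}A_γ sin(kℓ_γ), d = Cs² + Sn², and assume d ≠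 0. Then Im k̈ = −(Cs/d)·[ 2k̇ Σ_γ (k ℓ̇_γ ℓ_γ cos(kℓ_γ) + ℓ̇_γ sin(kℓ_γ)) A_γ(−1)^{m_γ} + (k̇)² Σ_γ ℓ_γ²(−1)^{m_γ}A_γ cos(kℓ_γ) + k Σ_γ (k(ℓ̇_γ)² cos(kℓ_γ) + ℓ̈_γ sin(kℓ_γ))(−1)^{m_γ}A_γ ] + (Sn/d)·[ 2k̇ Σ_γ (−k ℓ̇_γ ℓ_γ sin(kℓ_γ) + ℓ̇_γ cos(kℓ_γ)) A_γ(−1)^{m_γ} − (k̇)² Σ_γ ℓ_γ²(−1)^{m_γ}A_γ sin(kℓ_γ) + k Σ_γ (ℓ̈_γ cos(kℓ_γ) − k(ℓ̇_γ)² sin(kℓ_γ))(−1)^{m_γ}A_γ ]. -/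
open Complex Real

/-- When the pseudo-orbit coefficients `A_γ` are `k`-independent and real, and the pole
position `k` and its first derivative `k̇` are real, the second-order equation yields the
explicit formula for the imaginary part of the second derivative `k̈`. -/
theorem stmt_9 {G : Type*} [Fintype G] (m : G → ℕ) (A ℓ ℓd ℓdd : G → ℝ) (k kd : ℝ)
    (kdd : ℂ)
    (heq : kdd * ∑ γ, (ℓ γ : ℂ) * (A γ : ℂ) * (-1 : ℂ) ^ (m γ)
          * Complex.exp (Complex.I * k * (ℓ γ))
        + 2 * (kd : ℂ) * ∑ γ, (Complex.I * k * (ℓ γ : ℂ) * (ℓd γ : ℂ) * (A γ : ℂ)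
            + (ℓd γ : ℂ) * (A γ : ℂ)) * (-1 : ℂ) ^ (m γ)
          * Complex.exp (Complex.I * k * (ℓ γ))
        + (kd : ℂ) ^ 2 * ∑ γ, Complex.I * (ℓ γ : ℂ) ^ 2 * (A γ : ℂ) * (-1 : ℂ) ^ (m γ)
          * Complex.exp (Complex.I * k * (ℓ γ))
        + (k : ℂ) * ∑ γ, ((ℓdd γ : ℂ) + Complex.I * k * (ℓd γ : ℂ) ^ 2) * (A γ : ℂ)
          * (-1 : ℂ) ^ (m γ) * Complex.exp (Complex.I * k * (ℓ γ)) = 0)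
    (Cs Sn d : ℝ)
    (hCs : Cs = ∑ γ, ℓ γ * (-1 : ℝ) ^ (m γ) * A γ * Real.cos (k * ℓ γ))
    (hSn : Sn = ∑ γ, ℓ γ * (-1 : ℝ) ^ (m γ) * A γ * Real.sin (k * ℓ γ))
    (hd : d = Cs ^ 2 + Sn ^ 2) (hd0 : d ≠ 0) :
    kdd.im = -(Cs / d) *
        (2 * kd * ∑ γ, (k * ℓd γ * ℓ γ * Real.cos (k * ℓ γ)
              + ℓd γ * Real.sin (k * ℓ γ)) * A γ * (-1 : ℝ) ^ (m γ)
          + kd ^ 2 * ∑ γ, ℓ γ ^ 2 * (-1 : ℝ) ^ (m γ) * A γ * Real.cos (k * ℓ γ)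
          + k * ∑ γ, (k * (ℓd γ) ^ 2 * Real.cos (k * ℓ γ)
              + ℓdd γ * Real.sin (k * ℓ γ)) * (-1 : ℝ) ^ (m γ) * A γ)
      + (Sn / d) *
        (2 * kd * ∑ γ, (-(k * ℓd γ * ℓ γ * Real.sin (k * ℓ γ))
              + ℓd γ * Real.cos (k * ℓ γ)) * A γ * (-1 : ℝ) ^ (m γ)
          - kd ^ 2 * ∑ γ, ℓ γ ^ 2 * (-1 : ℝ) ^ (m γ) * A γ * Real.sin (k * ℓ γ)
          + k * ∑ γ, (ℓdd γ * Real.cos (k * ℓ γ)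
              - k * (ℓd γ) ^ 2 * Real.sin (k * ℓ γ)) * (-1 : ℝ) ^ (m γ) * A γ) := by
  set P2 : ℝ := ∑ γ, (k * ℓd γ * ℓ γ * Real.cos (k * ℓ γ)
      + ℓd γ * Real.sin (k * ℓ γ)) * A γ * (-1 : ℝ) ^ (m γ) with hP2
  set Q2 : ℝ := ∑ γ, (-(k * ℓd γ * ℓ γ * Real.sin (k * ℓ γ))
      + ℓd γ * Real.cos (k * ℓ γ)) * A γ * (-1 : ℝ) ^ (m γ) with hQ2
  set P3 : ℝ := ∑ γ, ℓ γ ^ 2 * (-1 : ℝ) ^ (m γ) * A γ * Real.cos (k * ℓ γ) with hP3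
  set Q3 : ℝ := ∑ γ, ℓ γ ^ 2 * (-1 : ℝ) ^ (m γ) * A γ * Real.sin (k * ℓ γ) with hQ3
  set P4 : ℝ := ∑ γ, (k * (ℓd γ) ^ 2 * Real.cos (k * ℓ γ)
      + ℓdd γ * Real.sin (k * ℓ γ)) * (-1 : ℝ) ^ (m γ) * A γ with hP4
  set Q4 : ℝ := ∑ γ, (ℓdd γ * Real.cos (k * ℓ γ)
      - k * (ℓd γ) ^ 2 * Real.sin (k * ℓ γ)) * (-1 : ℝ) ^ (m γ) * A γ with hQ4
  have hexp : ∀ γ, Complex.exp (Complex.I * k * (ℓ γ))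
      = (Real.cos (k * ℓ γ) : ℂ) + (Real.sin (k * ℓ γ) : ℂ) * Complex.I := by
    intro γ
    rw [show Complex.I * k * (ℓ γ) = ((k * ℓ γ : ℝ) : ℂ) * Complex.I by push_cast; ring,
      Complex.exp_mul_I, Complex.ofReal_cos, Complex.ofReal_sin]
  have hneg : ∀ γ, ((-1 : ℂ)) ^ (m γ) = (((-1 : ℝ) ^ (m γ) : ℝ) : ℂ) := by
    intro γ; push_cast; ring
  have hZ : (∑ γ, (ℓ γ : ℂ) * (A γ : ℂ) * (-1 : ℂ) ^ (m γ)
      * Complex.exp (Complex.I * k * (ℓ γ))) = (Cs : ℂ) + (Sn : ℂ) * Complex.I := by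
    rw [hCs, hSn, Complex.ofReal_sum, Complex.ofReal_sum, Finset.sum_mul,
      ← Finset.sum_add_distrib]
    refine Finset.sum_congr rfl fun γ _ => ?_
    rw [hexp γ, hneg γ]; push_cast; ring
  have hS2 : (∑ γ, (Complex.I * k * (ℓ γ : ℂ) * (ℓd γ : ℂ) * (A γ : ℂ)
        + (ℓd γ : ℂ) * (A γ : ℂ)) * (-1 : ℂ) ^ (m γ)
      * Complex.exp (Complex.I * k * (ℓ γ))) = (Q2 : ℂ) + (P2 : ℂ) * Complex.I := by
    rw [hQ2, hP2, Complex.ofReal_sum, Complex.ofReal_sum, Finset.sum_mul,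
      ← Finset.sum_add_distrib]
    refine Finset.sum_congr rfl fun γ _ => ?_
    rw [hexp γ, hneg γ]; push_cast
    ring_nf
    rw [Complex.I_sq]; ring
  have hS3 : (∑ γ, Complex.I * (ℓ γ : ℂ) ^ 2 * (A γ : ℂ) * (-1 : ℂ) ^ (m γ)
      * Complex.exp (Complex.I * k * (ℓ γ))) = -(Q3 : ℂ) + (P3 : ℂ) * Complex.I := by
    rw [hQ3, hP3, Complex.ofReal_sum, Complex.ofReal_sum, Finset.sum_mul,
      ← Finset.sum_neg_distrib, ← Finset.sum_add_distrib]
    refine Finset.sum_congr rfl fun γ _ => ?_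
    rw [hexp γ, hneg γ]; push_cast
    ring_nf
    rw [Complex.I_sq]; ring
  have hS4 : (∑ γ, ((ℓdd γ : ℂ) + Complex.I * k * (ℓd γ : ℂ) ^ 2) * (A γ : ℂ)
      * (-1 : ℂ) ^ (m γ) * Complex.exp (Complex.I * k * (ℓ γ)))
      = (Q4 : ℂ) + (P4 : ℂ) * Complex.I := by
    rw [hQ4, hP4, Complex.ofReal_sum, Complex.ofReal_sum, Finset.sum_mul,
      ← Finset.sum_add_distrib]
    refine Finset.sum_congr rfl fun γ _ => ?_
    rw [hexp γ, hneg γ]; push_cast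
    ring_nf
    rw [Complex.I_sq]; ring
  rw [hZ, hS2, hS3, hS4] at heq
  have hre := congrArg Complex.re heq
  have him := congrArg Complex.im heq
  simp only [Complex.add_re, Complex.add_im, Complex.mul_re, Complex.mul_im,
    Complex.ofReal_re, Complex.ofReal_im, Complex.I_re, Complex.I_im, Complex.neg_re,
    Complex.neg_im, Complex.zero_re, Complex.zero_im, Complex.re_ofNat, Complex.im_ofNat,
    ← Complex.ofReal_pow] at hre him
  have hre' : kdd.re * Cs - kdd.im * Sn + 2 * kd * Q2 - kd ^ 2 * Q3 + k * Q4 = 0 := by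
    rw [← hre]; ring
  have him' : kdd.re * Sn + kdd.im * Cs + 2 * kd * P2 + kd ^ 2 * P3 + k * P4 = 0 := by
    rw [← him]; ring
  have hkey : kdd.im * d = -Cs * (2 * kd * P2 + kd ^ 2 * P3 + k * P4)
      + Sn * (2 * kd * Q2 - kd ^ 2 * Q3 + k * Q4) := by
    rw [hd]; linear_combination Cs * him' - Sn * hre'
  have hgoal : kdd.im = (-Cs * (2 * kd * P2 + kd ^ 2 * P3 + k * P4)
      + Sn * (2 * kd * Q2 - kd ^ 2 * Q3 + k * Q4)) / d := by
    rw [eq_div_iff hd0]; exact hkey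
  rw [hgoal]; ring
end

section
/- Let ℓ₁, ℓ₂ > 0 be real, α₁, α₂ ∈ ℝ, and k ∈ ℂ with k ≠ 0. There exists a nonzero tuple (a₁, b₁, a₂, b₂, c₁, c₂) ∈ ℂ⁶ satisfying the linear system: a₁ + b₁ = c₁, a₂ + b₂ = c₁, ik·(a₁ − b₁) + ik·(a₂ − b₂) + ik·c₁ = α₁·c₁, a₁e^{ikℓ₁} + b₁e^{−ikℓ₁} = c₂, a₂e^{ikℓ₂} + b₂e^{−ikℓ₂} = c₂, and −ik·(a₁e^{ikℓ₁} − b₁e^{−ikℓ₁}) − ik·(a₂e^{ikℓ₂} − b₂e^{−ikℓ₂}) + ik·c₂ = α₂·c₂, if and only if (α₁ − ik)(α₂ − ik)·sin(kℓ₁)·sin(kℓ₂) − 4k²·sin²(k(ℓ₁+ℓ₂)/2) + k·(α₁ + α₂ − 2ik)·sin(k(ℓ₁+ℓ₂)) = 0. -/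
/-!
Eliminating `c₁` and `c₂` leaves a homogeneous `4 × 4` system for `(a₁, b₁, a₂, b₂)`, which has a
nontrivial solution iff its determinant vanishes. Writing `u = e^{ikℓ₁}`, `v = e^{ikℓ₂}`, the
identity `sin z · e^{iz} = (1 - e^{2iz}) i / 2` shows that this determinant is `4 (uv)²` times the
resonance function, and `u, v ≠ 0`.
-/

open Complex Matrix

theorem Complex.sin_mul_exp_mul_I (z : ℂ) :
    sin z * exp (z * I) = (1 - exp (z * I) ^ 2) * I / 2 := by
  have h : exp (-z * I) * exp (z * I) = 1 := by rw [← exp_add]; simp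
  rw [sin]
  linear_combination I / 2 * h

theorem Complex.sin_half_sq_mul_exp_mul_I (z : ℂ) :
    sin (z / 2) ^ 2 * exp (z * I) = -(1 - exp (z * I)) ^ 2 / 4 := by
  have h : exp (z / 2 * I) ^ 2 = exp (z * I) := by rw [← exp_nat_mul]; ring_nf
  have := congrArg (· ^ 2) (sin_mul_exp_mul_I (z / 2))
  simp only [h, mul_pow] at this
  linear_combination this + (1 - exp (z * I)) ^ 2 / 4 * I_sq

/-- The matching conditions at the two vertices of the loop, with `κ = ik`, `u = e^{ikℓ₁}` and
`v = e^{ikℓ₂}`. -/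
def LoopSystem (κ α₁ α₂ u v a₁ b₁ a₂ b₂ c₁ c₂ : ℂ) : Prop :=
  a₁ + b₁ = c₁ ∧
  a₂ + b₂ = c₁ ∧
  κ * (a₁ - b₁) + κ * (a₂ - b₂) + κ * c₁ = α₁ * c₁ ∧
  a₁ * u + b₁ * u⁻¹ = c₂ ∧
  a₂ * v + b₂ * v⁻¹ = c₂ ∧
  -κ * (a₁ * u - b₁ * u⁻¹) - κ * (a₂ * v - b₂ * v⁻¹) + κ * c₂ = α₂ * c₂

/-- The system for `(a₁, b₁, a₂, b₂)` left after eliminating `c₁, c₂`; the two rows of the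
second vertex are multiplied by `uv` to clear the inverses. -/
def loopMatrix (κ α₁ α₂ u v : ℂ) : Matrix (Fin 4) (Fin 4) ℂ :=
  !![1, 1, -1, -1;
     2 * κ - α₁, -α₁, κ, -κ;
     u ^ 2 * v, v, -(u * v ^ 2), -u;
     -α₂ * u ^ 2 * v, (2 * κ - α₂) * v, -κ * u * v ^ 2, κ * u]

def loopResonancePoly (κ α₁ α₂ u v : ℂ) : ℂ :=
  -(α₁ - κ) * (α₂ - κ) * (1 - u ^ 2) * (1 - v ^ 2) - 4 * κ ^ 2 * (1 - u * v) ^ 2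
    + 2 * κ * (α₁ + α₂ - 2 * κ) * (1 - (u * v) ^ 2)

theorem det_loopMatrix (κ α₁ α₂ u v : ℂ) :
    (loopMatrix κ α₁ α₂ u v).det = u * v * loopResonancePoly κ α₁ α₂ u v := by
  simp [loopMatrix, loopResonancePoly, det_succ_row_zero, Fin.sum_univ_succ, Fin.succAbove]
  ring

theorem loopSystem_iff {κ α₁ α₂ u v : ℂ} (hu : u ≠ 0) (hv : v ≠ 0) {a₁ b₁ a₂ b₂ c₁ c₂ : ℂ} :
    LoopSystem κ α₁ α₂ u v a₁ b₁ a₂ b₂ c₁ c₂ ↔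
      c₁ = a₁ + b₁ ∧ c₂ = a₁ * u + b₁ * u⁻¹ ∧
        loopMatrix κ α₁ α₂ u v *ᵥ ![a₁, b₁, a₂, b₂] = 0 := by
  simp only [LoopSystem, loopMatrix, cons_mulVec, cons_dotProduct, head_cons, tail_cons,
    dotProduct_of_isEmpty, add_zero, empty_mulVec, cons_eq_zero_iff, zero_empty, and_true]
  constructor
  · rintro ⟨h₁, h₂, h₃, h₄, h₅, h₆⟩
    refine ⟨h₁.symm, h₄.symm, ?_, ?_, ?_, ?_⟩
    · linear_combination h₁ - h₂
    · linear_combination h₃ + (κ - α₁) * h₁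
    · linear_combination (norm := (field_simp; ring1)) u * v * (h₄ - h₅)
    · linear_combination (norm := (field_simp; ring1)) u * v * (h₆ + (κ - α₂) * h₄)
  · rintro ⟨rfl, rfl, e₀, e₁, e₂, e₃⟩
    refine ⟨rfl, ?_, ?_, rfl, ?_, ?_⟩
    · linear_combination -e₀
    · linear_combination e₁
    · linear_combination (norm := (field_simp; ring1)) -(u * v)⁻¹ * e₂
    · linear_combination (norm := (field_simp; ring1)) (u * v)⁻¹ * e₃

theorem exists_loopSystem_iff {κ α₁ α₂ u v : ℂ} (hu : u ≠ 0) (hv : v ≠ 0) :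
    (∃ a₁ b₁ a₂ b₂ c₁ c₂ : ℂ, (a₁, b₁, a₂, b₂, c₁, c₂) ≠ (0, 0, 0, 0, 0, 0) ∧
      LoopSystem κ α₁ α₂ u v a₁ b₁ a₂ b₂ c₁ c₂) ↔ (loopMatrix κ α₁ α₂ u v).det = 0 := by
  rw [← Matrix.exists_mulVec_eq_zero_iff]
  constructor
  · rintro ⟨a₁, b₁, a₂, b₂, c₁, c₂, hne, hsys⟩
    obtain ⟨rfl, rfl, hker⟩ := (loopSystem_iff hu hv).1 hsys
    refine ⟨![a₁, b₁, a₂, b₂], fun h ↦ hne ?_, hker⟩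
    simp_all
  · rintro ⟨w, hw, hker⟩
    have hw' : ![w 0, w 1, w 2, w 3] = w := by ext i; fin_cases i <;> rfl
    refine ⟨w 0, w 1, w 2, w 3, _, _, fun h ↦ hw ?_,
      (loopSystem_iff hu hv).2 ⟨rfl, rfl, hw' ▸ hker⟩⟩
    simp only [Prod.mk.injEq] at h
    rw [← hw']
    simp [h]

theorem loopResonancePoly_exp (α₁ α₂ k x y : ℂ) :
    loopResonancePoly (I * k) α₁ α₂ (exp (I * k * x)) (exp (I * k * y)) =
      4 * (exp (I * k * x) * exp (I * k * y)) *
        ((α₁ - I * k) * (α₂ - I * k) * sin (k * x) * sin (k * y)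
          - 4 * k ^ 2 * sin (k * (x + y) / 2) ^ 2
          + k * (α₁ + α₂ - 2 * I * k) * sin (k * (x + y))) := by
  have hx := sin_mul_exp_mul_I (k * x)
  have hy := sin_mul_exp_mul_I (k * y)
  have hxy := sin_mul_exp_mul_I (k * (x + y))
  have hhalf := sin_half_sq_mul_exp_mul_I (k * (x + y))
  have hexp : exp (k * (x + y) * I) = exp (I * k * x) * exp (I * k * y) := by
    rw [← exp_add]; ring_nf
  rw [hexp] at hxy hhalf
  rw [show k * x * I = I * k * x by ring] at hx
  rw [show k * y * I = I * k * y by ring] at hy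
  set u := exp (I * k * x)
  set v := exp (I * k * y)
  unfold loopResonancePoly
  linear_combination -(4 * (α₁ - I * k) * (α₂ - I * k) * sin (k * y) * v) * hx
    - (4 * (α₁ - I * k) * (α₂ - I * k) * ((1 - u ^ 2) * I / 2)) * hy
    + 16 * k ^ 2 * hhalf - 4 * k * (α₁ + α₂ - 2 * I * k) * hxy
    - ((α₁ - I * k) * (α₂ - I * k) * (1 - u ^ 2) * (1 - v ^ 2)
        + 4 * k ^ 2 * (1 - u * v) ^ 2) * I_sq

theorem stmt_10_general (ℓ₁ ℓ₂ : ℝ) (α₁ α₂ : ℝ) (k : ℂ) :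
    (∃ a₁ b₁ a₂ b₂ c₁ c₂ : ℂ,
      (a₁, b₁, a₂, b₂, c₁, c₂) ≠ (0, 0, 0, 0, 0, 0) ∧
      a₁ + b₁ = c₁ ∧
      a₂ + b₂ = c₁ ∧
      Complex.I * k * (a₁ - b₁) + Complex.I * k * (a₂ - b₂) + Complex.I * k * c₁
        = α₁ * c₁ ∧
      a₁ * Complex.exp (Complex.I * k * ℓ₁) + b₁ * Complex.exp (-(Complex.I * k * ℓ₁))
        = c₂ ∧
      a₂ * Complex.exp (Complex.I * k * ℓ₂) + b₂ * Complex.exp (-(Complex.I * k * ℓ₂))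
        = c₂ ∧
      -(Complex.I * k) * (a₁ * Complex.exp (Complex.I * k * ℓ₁)
          - b₁ * Complex.exp (-(Complex.I * k * ℓ₁)))
        - Complex.I * k * (a₂ * Complex.exp (Complex.I * k * ℓ₂)
          - b₂ * Complex.exp (-(Complex.I * k * ℓ₂)))
        + Complex.I * k * c₂ = α₂ * c₂)
    ↔ ((α₁ : ℂ) - Complex.I * k) * ((α₂ : ℂ) - Complex.I * k)
        * Complex.sin (k * ℓ₁) * Complex.sin (k * ℓ₂)
      - 4 * k ^ 2 * (Complex.sin (k * (ℓ₁ + ℓ₂) / 2)) ^ 2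
      + k * ((α₁ : ℂ) + (α₂ : ℂ) - 2 * Complex.I * k)
        * Complex.sin (k * (ℓ₁ + ℓ₂)) = 0 := by
  have hu := exp_ne_zero (I * k * ℓ₁)
  have hv := exp_ne_zero (I * k * ℓ₂)
  simp only [exp_neg]
  refine (exists_loopSystem_iff (κ := I * k) (α₁ := α₁) (α₂ := α₂) hu hv).trans ?_
  rw [det_loopMatrix, loopResonancePoly_exp]
  simp [hu, hv]

/-- Resonance condition for a loop of two edges of lengths `ℓ₁`, `ℓ₂` with one lead at
each of the two vertices and `δ`-couplings of strengths `α₁`, `α₂`: a nontrivial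
generalized eigenfunction exists iff
`(α₁-ik)(α₂-ik) sin kℓ₁ sin kℓ₂ - 4k² sin²(k(ℓ₁+ℓ₂)/2) + k(α₁+α₂-2ik) sin k(ℓ₁+ℓ₂) = 0`. -/
theorem stmt_10 (ℓ₁ ℓ₂ : ℝ) (hℓ₁ : 0 < ℓ₁) (hℓ₂ : 0 < ℓ₂) (α₁ α₂ : ℝ) (k : ℂ)
    (hk : k ≠ 0) :
    (∃ a₁ b₁ a₂ b₂ c₁ c₂ : ℂ,
      (a₁, b₁, a₂, b₂, c₁, c₂) ≠ (0, 0, 0, 0, 0, 0) ∧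
      a₁ + b₁ = c₁ ∧
      a₂ + b₂ = c₁ ∧
      Complex.I * k * (a₁ - b₁) + Complex.I * k * (a₂ - b₂) + Complex.I * k * c₁
        = α₁ * c₁ ∧
      a₁ * Complex.exp (Complex.I * k * ℓ₁) + b₁ * Complex.exp (-(Complex.I * k * ℓ₁))
        = c₂ ∧
      a₂ * Complex.exp (Complex.I * k * ℓ₂) + b₂ * Complex.exp (-(Complex.I * k * ℓ₂))
        = c₂ ∧
      -(Complex.I * k) * (a₁ * Complex.exp (Complex.I * k * ℓ₁)
          - b₁ * Complex.exp (-(Complex.I * k * ℓ₁)))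
        - Complex.I * k * (a₂ * Complex.exp (Complex.I * k * ℓ₂)
          - b₂ * Complex.exp (-(Complex.I * k * ℓ₂)))
        + Complex.I * k * c₂ = α₂ * c₂)
    ↔ ((α₁ : ℂ) - Complex.I * k) * ((α₂ : ℂ) - Complex.I * k)
        * Complex.sin (k * ℓ₁) * Complex.sin (k * ℓ₂)
      - 4 * k ^ 2 * (Complex.sin (k * (ℓ₁ + ℓ₂) / 2)) ^ 2
      + k * ((α₁ : ℂ) + (α₂ : ℂ) - 2 * Complex.I * k)
        * Complex.sin (k * (ℓ₁ + ℓ₂)) = 0 :=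
  stmt_10_general ℓ₁ ℓ₂ α₁ α₂ k
end

section
/- Let ℓ > 0, α ∈ ℝ, n a nonzero integer, and k₀ = nπ/ℓ. Then F(k₀) = 0, where F(k) := (α − 3ik)² − 2(α − ik)²·e^{2ikℓ} + 8k²·e^{2ikℓ} + (α + ik)²·e^{4ikℓ}. -/
open Complex Real

/-- For the loop graph with two edges of equal length `ℓ`, two leads and `δ`-couplings of
strength `α` at both vertices, `k₀ = nπ/ℓ` (with `n` a nonzero integer) is a zero of the
left-hand side `F` of the resonance condition, i.e. an embedded eigenvalue. -/
theorem stmt_11 (ℓ : ℝ) (hℓ : 0 < ℓ) (α : ℝ) (n : ℤ) (hn : n ≠ 0)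
    (k₀ : ℝ) (hk₀ : k₀ = n * Real.pi / ℓ) :
    ((α : ℂ) - 3 * Complex.I * k₀) ^ 2
      - 2 * ((α : ℂ) - Complex.I * k₀) ^ 2 * Complex.exp (2 * Complex.I * k₀ * ℓ)
      + 8 * (k₀ : ℂ) ^ 2 * Complex.exp (2 * Complex.I * k₀ * ℓ)
      + ((α : ℂ) + Complex.I * k₀) ^ 2 * Complex.exp (4 * Complex.I * k₀ * ℓ) = 0 := by
  have hℓ0 : (ℓ : ℂ) ≠ 0 := by exact_mod_cast hℓ.ne'
  have hkℓ : (k₀ : ℂ) * ℓ = n * Real.pi := by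
    rw [hk₀]; push_cast; field_simp
  have h2 : Complex.exp (2 * Complex.I * k₀ * ℓ) = 1 := by
    have : 2 * Complex.I * k₀ * ℓ = n * (2 * Real.pi * Complex.I) := by
      rw [mul_assoc, hkℓ]; push_cast; ring
    rw [this, Complex.exp_int_mul_two_pi_mul_I]
  have h4 : Complex.exp (4 * Complex.I * k₀ * ℓ) = 1 := by
    have : 4 * Complex.I * k₀ * ℓ = (2 * n : ℤ) * (2 * Real.pi * Complex.I) := by
      rw [mul_assoc, hkℓ]; push_cast; ring
    rw [this, Complex.exp_int_mul_two_pi_mul_I]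
  rw [h2, h4]; ring_nf; rw [Complex.I_sq]; ring
end

section
/- Let ℓ₁, ℓ₂ > 0 be real, α ∈ ℝ, and k ∈ ℂ with k ≠ 0. There exists a nonzero tuple (a₁, b₂, c₁, c₂) ∈ ℂ⁴ satisfying the linear system: a₁·sin(kℓ₁) = c₁, b₂·((α/k)·sin(kℓ₂) + cos(kℓ₂)) = c₁, c₁ = c₂, and −a₁·k·cos(kℓ₁) − b₂·(α·cos(kℓ₂) − k·sin(kℓ₂)) + ik·(c₁ + c₂) = 0, if and only if k·cos(kℓ₁)·cos(kℓ₂) + (α − 2ik)·sin(kℓ₁)·cos(kℓ₂) + α·cos(kℓ₁)·sin(kℓ₂) − (2iα + k)·sin(kℓ₁)·sin(kℓ₂) = 0. -/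
open Complex

/-
Substituting `c₁ = c₂ = a₁ sin kℓ₁` and clearing the denominator `k` turns the coupling
conditions into a homogeneous 2 × 2 linear system in `(a₁, b₂)`, whose determinant is
`k` times the resonance condition; such a system has a nontrivial solution iff its
determinant vanishes.
-/

theorem exists_pair_ne_zero_linear_system_iff {R : Type*} [CommRing R] [IsDomain R]
    (a b c d : R) :
    (∃ x y : R, (x, y) ≠ (0, 0) ∧ a * x + b * y = 0 ∧ c * x + d * y = 0) ↔
      a * d - b * c = 0 := by
  rw [← Matrix.det_fin_two_of, ← Matrix.exists_mulVec_eq_zero_iff]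
  constructor
  · rintro ⟨x, y, hxy, h₁, h₂⟩
    refine ⟨![x, y], fun h => hxy ?_, ?_⟩
    · simpa using congrFun h
    · ext i
      fin_cases i <;> simp [Matrix.mulVec, dotProduct, h₁, h₂]
  · rintro ⟨v, hv, h⟩
    refine ⟨v 0, v 1, fun h => hv ?_, ?_, ?_⟩
    · ext i
      fin_cases i <;> simp_all
    · simpa [Matrix.mulVec, dotProduct] using congrFun h 0
    · simpa [Matrix.mulVec, dotProduct] using congrFun h 1

theorem cross_resonator_coupling_iff {α k s₁ c₁ s₂ c₂ : ℂ} (hk : k ≠ 0) :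
    (∃ a₁ b₂ c₁' c₂' : ℂ,
      (a₁, b₂, c₁', c₂') ≠ (0, 0, 0, 0) ∧
      a₁ * s₁ = c₁' ∧
      b₂ * ((α / k) * s₂ + c₂) = c₁' ∧
      c₁' = c₂' ∧
      -(a₁ * k * c₁) - b₂ * (α * c₂ - k * s₂) + I * k * (c₁' + c₂') = 0) ↔
    (∃ x y : ℂ, (x, y) ≠ (0, 0) ∧
      k * s₁ * x + -(α * s₂ + k * c₂) * y = 0 ∧
      (k * c₁ - 2 * I * k * s₁) * x + (α * c₂ - k * s₂) * y = 0) := by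
  constructor
  · rintro ⟨a₁, b₂, _, _, hne, rfl, h₂, rfl, h₄⟩
    refine ⟨a₁, b₂, fun h => hne ?_, ?_, by linear_combination -h₄⟩
    · simp_all
    · field_simp at h₂
      linear_combination -h₂
  · rintro ⟨x, y, hxy, h₁, h₂⟩
    refine ⟨x, y, x * s₁, x * s₁, fun h => hxy (by simp_all), rfl, ?_, rfl, ?_⟩
    · field_simp
      linear_combination -h₁
    · linear_combination -h₂

theorem stmt_13_general (ℓ₁ ℓ₂ : ℝ) (α : ℝ) (k : ℂ)
    (hk : k ≠ 0) :
    (∃ a₁ b₂ c₁ c₂ : ℂ,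
      (a₁, b₂, c₁, c₂) ≠ (0, 0, 0, 0) ∧
      a₁ * Complex.sin (k * ℓ₁) = c₁ ∧
      b₂ * ((α / k) * Complex.sin (k * ℓ₂) + Complex.cos (k * ℓ₂)) = c₁ ∧
      c₁ = c₂ ∧
      -(a₁ * k * Complex.cos (k * ℓ₁))
        - b₂ * ((α : ℂ) * Complex.cos (k * ℓ₂) - k * Complex.sin (k * ℓ₂))
        + Complex.I * k * (c₁ + c₂) = 0)
    ↔ k * Complex.cos (k * ℓ₁) * Complex.cos (k * ℓ₂)
      + ((α : ℂ) - 2 * Complex.I * k) * Complex.sin (k * ℓ₁) * Complex.cos (k * ℓ₂)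
      + (α : ℂ) * Complex.cos (k * ℓ₁) * Complex.sin (k * ℓ₂)
      - (2 * Complex.I * (α : ℂ) + k) * Complex.sin (k * ℓ₁) * Complex.sin (k * ℓ₂)
        = 0 := by
  rw [cross_resonator_coupling_iff hk, exists_pair_ne_zero_linear_system_iff]
  constructor <;> intro h
  · exact (mul_eq_zero_iff_left hk).mp (by linear_combination h)
  · linear_combination k * h

/-- Resonance condition for the cross-shaped resonator: one central vertex with two
internal edges (Dirichlet end on the first, Robin end `f' = αf` on the second) and two
leads attached with standard coupling. A nontrivial solution of the coupling equations
exists iff `k cos kℓ₁ cos kℓ₂ + (α-2ik) sin kℓ₁ cos kℓ₂ + α cos kℓ₁ sin kℓ₂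
- (2iα+k) sin kℓ₁ sin kℓ₂ = 0`. -/
theorem stmt_13 (ℓ₁ ℓ₂ : ℝ) (hℓ₁ : 0 < ℓ₁) (hℓ₂ : 0 < ℓ₂) (α : ℝ) (k : ℂ)
    (hk : k ≠ 0) :
    (∃ a₁ b₂ c₁ c₂ : ℂ,
      (a₁, b₂, c₁, c₂) ≠ (0, 0, 0, 0) ∧
      a₁ * Complex.sin (k * ℓ₁) = c₁ ∧
      b₂ * ((α / k) * Complex.sin (k * ℓ₂) + Complex.cos (k * ℓ₂)) = c₁ ∧
      c₁ = c₂ ∧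
      -(a₁ * k * Complex.cos (k * ℓ₁))
        - b₂ * ((α : ℂ) * Complex.cos (k * ℓ₂) - k * Complex.sin (k * ℓ₂))
        + Complex.I * k * (c₁ + c₂) = 0)
    ↔ k * Complex.cos (k * ℓ₁) * Complex.cos (k * ℓ₂)
      + ((α : ℂ) - 2 * Complex.I * k) * Complex.sin (k * ℓ₁) * Complex.cos (k * ℓ₂)
      + (α : ℂ) * Complex.cos (k * ℓ₁) * Complex.sin (k * ℓ₂)
      - (2 * Complex.I * (α : ℂ) + k) * Complex.sin (k * ℓ₁) * Complex.sin (k * ℓ₂)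
        = 0 :=
  stmt_13_general ℓ₁ ℓ₂ α k hk
end
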